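/- Let E : ℝ³ → M₃(ℝ) be a Schwartz matrix field. Define the row-wise curl by (∇×E)_{im} = ∑_{k,j} ε_{mkj} ∂ₖE_{ij} (ε the Levi-Civita symbol) and the divergence (∇·E)ᵢ = ∑ⱼ ∂ⱼE_{ij}. Then for each s ≥ 0 there is a constant C such that ‖∇E‖_{H^s} ≤ C(‖∇·E‖_{H^s} + ‖∇×E‖_{H^s}). -/

import Mathlib

/-!
On the Fourier side the derivative `∂ₖ E_{ij}` becomes `i ξₖ Ê_{ij}(ξ)`, so for every row `i`
and frequency `ξ` the squared Fourier densities of gradient, divergence and curl are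
`|ξ|²|v|²`, `|ξ·v|²` and `|ξ×v|²` with `v = i Ê_{i·}(ξ)`. Lagrange's identity
`|ξ|²|v|² = |ξ·v|² + |ξ×v|²` turns this into an equality of integrands, the Fourier transform
of a Schwartz function being again Schwartz makes every weighted integrand integrable, and so
`‖∇E‖²_{H^s} = ‖∇·E‖²_{H^s} + ‖∇×E‖²_{H^s}`; the estimate holds with `C = 1`.
-/

open MeasureTheory

noncomputable section

abbrev E3 := EuclideanSpace ℝ (Fin 3)

/-- Partial derivative in the j-th coordinate direction. -/
def pd (j : Fin 3) (f : E3 → ℝ) (x : E3) : ℝ :=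
  fderiv ℝ f x (EuclideanSpace.single j 1)

/-- Fourier transform with the convention f̂(ξ) = ∫ f(x) e^{-i x·ξ} dx, of a real function. -/
def FTr (f : E3 → ℝ) (ξ : E3) : ℂ :=
  ∫ x, (f x : ℂ) * Complex.exp (-Complex.I * ((inner ℝ x ξ : ℝ) : ℂ))

/-- Squared H^s norm, defined via the Fourier transform. -/
def HsSq (s : ℝ) (f : E3 → ℝ) : ℝ :=
  ∫ ξ : E3, (1 + ‖ξ‖ ^ 2) ^ s * ‖FTr f ξ‖ ^ 2

/-- Levi-Civita symbol on Fin 3. -/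
def eps (m k j : Fin 3) : ℝ :=
  if (m, k, j) = (0, 1, 2) ∨ (m, k, j) = (1, 2, 0) ∨ (m, k, j) = (2, 0, 1) then 1
  else if (m, k, j) = (0, 2, 1) ∨ (m, k, j) = (2, 1, 0) ∨ (m, k, j) = (1, 0, 2) then -1
  else 0

open FourierTransform SchwartzMap LineDeriv

theorem SchwartzMap.postcompCLM_lineDerivOp {𝕜 E F G : Type*} [RCLike 𝕜]
    [NormedAddCommGroup E] [NormedSpace ℝ E]
    [NormedAddCommGroup F] [NormedSpace ℝ F] [NormedSpace 𝕜 F]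
    [NormedAddCommGroup G] [NormedSpace ℝ G] [NormedSpace 𝕜 G]
    (L : F →L[𝕜] G) (m : E) (f : 𝓢(E, F)) :
    postcompCLM L (∂_{m} f) = ∂_{m} (postcompCLM L f) := by
  ext x
  simp only [postcompCLM_apply, lineDerivOp_apply_eq_fderiv]
  exact (DFunLike.congr_fun
    ((L.restrictScalars ℝ).hasFDerivAt.comp x f.differentiableAt.hasFDerivAt).fderiv m).symm

/-- Mathlib's `𝓕` has kernel `e^{-2πi⟪x, ξ⟫}`, so `FTr φ` is `𝓕` of the complexified `φ`
evaluated at `(2π)⁻¹ • ξ` (see `FTrCLM_apply`). -/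
def FTrCLM : 𝓢(E3, ℝ) →L[ℝ] 𝓢(E3, ℂ) :=
  (compCLMOfContinuousLinearEquiv ℂ
      (ContinuousLinearEquiv.smulLeft (Units.mk0 (2 * Real.pi)⁻¹ (by positivity)) :
        E3 ≃L[ℝ] E3)).restrictScalars ℝ
    ∘L (fourierTransformCLM ℂ).restrictScalars ℝ ∘L postcompCLM Complex.ofRealCLM

lemma FTrCLM_apply (φ : 𝓢(E3, ℝ)) (ξ : E3) : FTrCLM φ ξ = FTr φ ξ := by
  simp only [FTrCLM, ContinuousLinearMap.coe_comp, Function.comp_apply,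
    ContinuousLinearMap.coe_restrictScalars', compCLMOfContinuousLinearEquiv_apply,
    fourierTransformCLM_apply, fourier_coe, Real.fourier_eq', FTr]
  congr 1 with x
  rw [ContinuousLinearEquiv.smulLeft_apply_apply, Units.smul_mk0, real_inner_smul_right,
    postcompCLM_apply, Complex.ofRealCLM_apply, smul_eq_mul]
  push_cast
  field_simp

lemma FTrCLM_lineDerivOp (φ : 𝓢(E3, ℝ)) (m ξ : E3) :
    FTrCLM (∂_{m} φ) ξ = Complex.I * inner ℝ ξ m * FTrCLM φ ξ := by
  simp only [FTrCLM, ContinuousLinearMap.coe_comp, Function.comp_apply,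
    ContinuousLinearMap.coe_restrictScalars', compCLMOfContinuousLinearEquiv_apply,
    fourierTransformCLM_apply, postcompCLM_lineDerivOp, fourier_lineDerivOp_eq]
  have hm : (fun x : E3 => inner ℝ x m).HasTemperateGrowth :=
    ((innerSL ℝ).flip m).hasTemperateGrowth
  rw [smul_apply, smulLeftCLM_apply_apply hm, ContinuousLinearEquiv.smulLeft_apply_apply,
    Units.smul_mk0, real_inner_smul_left]
  simp only [smul_eq_mul, Complex.real_smul]
  push_cast
  field_simp

lemma pd_eq_lineDerivOp (k : Fin 3) (φ : 𝓢(E3, ℝ)) :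
    pd k φ = ⇑(∂_{EuclideanSpace.single k (1 : ℝ)} φ : 𝓢(E3, ℝ)) :=
  rfl

lemma FTr_pd (φ : 𝓢(E3, ℝ)) (k : Fin 3) (ξ : E3) :
    FTr (pd k φ) ξ = Complex.I * ξ k * FTr φ ξ := by
  rw [pd_eq_lineDerivOp, ← FTrCLM_apply, ← FTrCLM_apply,
    FTrCLM_lineDerivOp, EuclideanSpace.inner_single_right]
  simp

theorem SchwartzMap.integrable_one_add_norm_sq_rpow_mul_norm_sq {E F : Type*}
    [NormedAddCommGroup E] [InnerProductSpace ℝ E] [FiniteDimensional ℝ E]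
    [MeasurableSpace E] [BorelSpace E] [NormedAddCommGroup F] [NormedSpace ℝ F]
    (s : ℝ) (g : 𝓢(E, F)) :
    Integrable (fun x => (1 + ‖x‖ ^ 2) ^ s * ‖g x‖ ^ 2) := by
  have hw := Function.hasTemperateGrowth_one_add_norm_sq_rpow E (s / 2)
  have h := (smulLeftCLM F (fun x : E => (1 + ‖x‖ ^ 2) ^ (s / 2)) g).memLp 2
    (volume : Measure E)
  rw [memLp_two_iff_integrable_sq_norm h.1] at h
  refine h.congr (.of_forall fun x => ?_)
  dsimp only
  rw [smulLeftCLM_apply_apply hw, norm_smul, mul_pow, Real.norm_of_nonneg (by positivity),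
    ← Real.rpow_natCast, ← Real.rpow_mul (by positivity)]
  norm_num

theorem lagrange_identity_eps (a : Fin 3 → ℝ) (v : Fin 3 → ℂ) :
    ∑ j, ∑ k, ‖(a k : ℂ) * v j‖ ^ 2 =
      ‖∑ j, (a j : ℂ) * v j‖ ^ 2 + ∑ m, ‖∑ k, ∑ j, (eps m k j : ℂ) * (a k * v j)‖ ^ 2 := by
  simp only [Fin.sum_univ_three, eps, Complex.sq_norm, Complex.normSq_apply]
  simp only [Fin.isValue, Complex.mul_re, Complex.ofReal_re, Complex.ofReal_im, zero_mul,
    sub_zero, Complex.mul_im, add_zero, Complex.add_re, Complex.add_im, Prod.mk.injEq, zero_ne_one,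
    Fin.reduceEq, and_self, and_false, and_true, or_self, ↓reduceIte, Complex.ofReal_zero,
    one_ne_zero, or_false,
    Complex.ofReal_one, one_mul, zero_add, Complex.ofReal_neg, neg_mul, Complex.neg_re,
    Complex.neg_im, or_true]
  ring

lemma integrable_HsSq_integrand (s : ℝ) (φ : 𝓢(E3, ℝ)) :
    Integrable (fun ξ : E3 => (1 + ‖ξ‖ ^ 2) ^ s * ‖FTr φ ξ‖ ^ 2) := by
  simpa only [FTrCLM_apply] using (FTrCLM φ).integrable_one_add_norm_sq_rpow_mul_norm_sq s

lemma integral_mul_sum_norm_sq_FTr {ι : Type*} [Fintype ι] (s : ℝ) (φ : ι → 𝓢(E3, ℝ)) :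
    ∫ ξ : E3, (1 + ‖ξ‖ ^ 2) ^ s * ∑ a, ‖FTr (φ a) ξ‖ ^ 2 = ∑ a, HsSq s (φ a) := by
  simp_rw [Finset.mul_sum]
  exact integral_finsetSum _ fun a _ => integrable_HsSq_integrand s (φ a)

theorem HsSq_grad_eq_div_add_curl (s : ℝ) (F : Fin 3 → 𝓢(E3, ℝ)) :
    ∑ j, ∑ k, HsSq s (pd k (F j)) =
      HsSq s (fun x => ∑ j, pd j (F j) x) +
        ∑ m, HsSq s (fun x => ∑ k, ∑ j, eps m k j * pd k (F j) x) := by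
  let P : Fin 3 → Fin 3 → 𝓢(E3, ℝ) := fun k j => ∂_{EuclideanSpace.single k (1 : ℝ)} (F j)
  let Q : Option (Fin 3) → 𝓢(E3, ℝ)
    | none => ∑ j, P j j
    | some m => ∑ k, ∑ j, eps m k j • P k j
  have hdiv : (fun x => ∑ j, pd j (F j) x) = Q none := by
    ext x; simp [Q, P, pd_eq_lineDerivOp]
  have hcurl (m : Fin 3) : (fun x => ∑ k, ∑ j, eps m k j * pd k (F j) x) = Q (some m) := by
    ext x; simp [Q, P, pd_eq_lineDerivOp]
  have hP (k j : Fin 3) (ξ : E3) : FTr (P k j) ξ = ξ k * (Complex.I * FTr (F j) ξ) := by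
    rw [← pd_eq_lineDerivOp, FTr_pd]; ring
  have hpointwise (ξ : E3) :
      ∑ p : Fin 3 × Fin 3, ‖FTr (P p.2 p.1) ξ‖ ^ 2 = ∑ o, ‖FTr (Q o) ξ‖ ^ 2 := by
    simp only [Fintype.sum_prod_type, Fintype.sum_option, Q, ← FTrCLM_apply, map_sum, map_smul,
      sum_apply, smul_apply, Complex.real_smul]
    simp only [FTrCLM_apply, hP]
    exact lagrange_identity_eps _ _
  calc ∑ j, ∑ k, HsSq s (pd k (F j))
      = ∫ ξ : E3, (1 + ‖ξ‖ ^ 2) ^ s * ∑ p : Fin 3 × Fin 3, ‖FTr (P p.2 p.1) ξ‖ ^ 2 := by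
        rw [integral_mul_sum_norm_sq_FTr, Fintype.sum_prod_type]; rfl
    _ = ∑ o, HsSq s (Q o) := by
        simp_rw [hpointwise]; exact integral_mul_sum_norm_sq_FTr s Q
    _ = _ := by rw [Fintype.sum_option, hdiv]; simp_rw [hcurl]

lemma HsSq_nonneg (s : ℝ) (f : E3 → ℝ) : 0 ≤ HsSq s f :=
  integral_nonneg fun _ => by positivity

lemma Real.sqrt_add_le_sqrt_add_sqrt {x y : ℝ} (hx : 0 ≤ x) (hy : 0 ≤ y) :
    √(x + y) ≤ √x + √y := by
  rw [Real.sqrt_le_iff]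
  refine ⟨by positivity, ?_⟩
  nlinarith [Real.sq_sqrt hx, Real.sq_sqrt hy, Real.sqrt_nonneg x, Real.sqrt_nonneg y]

theorem stmt_8_general (s : ℝ) :
    ∃ C > (0 : ℝ), ∀ E : Fin 3 → Fin 3 → SchwartzMap E3 ℝ,
      Real.sqrt (∑ i : Fin 3, ∑ j : Fin 3, ∑ k : Fin 3, HsSq s (pd k (E i j))) ≤
        C * (Real.sqrt (∑ i : Fin 3, HsSq s fun x => ∑ j : Fin 3, pd j (E i j) x) +
          Real.sqrt (∑ i : Fin 3, ∑ m : Fin 3,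
            HsSq s fun x => ∑ k : Fin 3, ∑ j : Fin 3, eps m k j * pd k (E i j) x)) := by
  refine ⟨1, one_pos, fun E => ?_⟩
  rw [one_mul, Finset.sum_congr rfl fun i _ => HsSq_grad_eq_div_add_curl s (E i),
    Finset.sum_add_distrib]
  exact Real.sqrt_add_le_sqrt_add_sqrt
    (Finset.sum_nonneg fun _ _ => HsSq_nonneg s _)
    (Finset.sum_nonneg fun _ _ => Finset.sum_nonneg fun _ _ => HsSq_nonneg s _)

/-- the div-curl estimate ‖∇E‖_{H^s} ≤ C (‖∇·E‖_{H^s} + ‖∇×E‖_{H^s})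
for Schwartz matrix fields E, where (∇×E)_{im} = ∑ ε_{mkj} ∂ₖE_{ij} and
(∇·E)ᵢ = ∑ⱼ ∂ⱼE_{ij}. -/
theorem stmt_8 (s : ℝ) (hs : 0 ≤ s) :
    ∃ C > (0 : ℝ), ∀ E : Fin 3 → Fin 3 → SchwartzMap E3 ℝ,
      Real.sqrt (∑ i : Fin 3, ∑ j : Fin 3, ∑ k : Fin 3, HsSq s (pd k (E i j))) ≤
        C * (Real.sqrt (∑ i : Fin 3, HsSq s fun x => ∑ j : Fin 3, pd j (E i j) x) +
          Real.sqrt (∑ i : Fin 3, ∑ m : Fin 3,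
            HsSq s fun x => ∑ k : Fin 3, ∑ j : Fin 3, eps m k j * pd k (E i j) x)) :=
  stmt_8_general s
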